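/- (Monotonicity under tighter prior information) Let Δmin, Δmax and Δmin', Δmax' be two pairs of bounds with 0 ≤ Δmin s a s' ≤ Δmin' s a s' and Δmax' s a s' ≤ Δmax s a s' for all s, a, s' (so the primed intervals are narrower), and suppose the primed feasible set Feas'(s,a) := {x : S → ℝ | (∀ s', Δmin' s a s' ≤ x s' ∧ x s' ≤ Δmax' s a s') ∧ ∑_{s'} x s' = 1} is nonempty for every s, a. Let g and g' be the worst-case satisfaction lower bounds computed from (Δmin, Δmax) and (Δmin', Δmax') respectively, with the same accepting set F. Then g k s ≤ g' k s for all k : ℕ and s : S; i.e., narrower transition-probability intervals yield a larger (less conservative) lower bound on the probability of constraint satisfaction. -/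

import Mathlib

open Finset
open scoped Classical

/-- The feasible set of transition-probability vectors at state `s` under action `a`. -/
def Feas {S A : Type*} [Fintype S] (Δmin Δmax : S → A → S → ℝ) (s : S) (a : A) :
    Set (S → ℝ) :=
  {x | (∀ s', Δmin s a s' ≤ x s' ∧ x s' ≤ Δmax s a s') ∧ ∑ s', x s' = 1}

/-- Worst-case one-step value of `h` over the feasible set. -/
noncomputable def kappaOf {S A : Type*} [Fintype S] (Δmin Δmax : S → A → S → ℝ)
    (h : S → ℝ) (s : S) (a : A) : ℝ :=
  sInf ((fun x : S → ℝ => ∑ s', h s' * x s') '' Feas Δmin Δmax s a)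

/-- The worst-case satisfaction lower bound `g`, indexed by remaining time. -/
noncomputable def gval {S A : Type*} [Fintype S] [Fintype A] [Nonempty A]
    (Δmin Δmax : S → A → S → ℝ) (F : Finset S) : ℕ → S → ℝ
  | 0 => fun s => if s ∈ F then 1 else 0
  | (k+1) => fun s =>
      Finset.univ.sup' Finset.univ_nonempty
        (fun a : A => kappaOf Δmin Δmax (gval Δmin Δmax F k) s a)

/-- `κ k s a`: worst-case optimization value at remaining time `k`. -/
noncomputable def kappa {S A : Type*} [Fintype S] [Fintype A] [Nonempty A]
    (Δmin Δmax : S → A → S → ℝ) (F : Finset S) (k : ℕ) (s : S) (a : A) : ℝ :=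
  kappaOf Δmin Δmax (gval Δmin Δmax F k) s a

/-- A transition kernel is admissible if it lies in the feasible set everywhere. -/
def Admissible {S A : Type*} [Fintype S] (Δmin Δmax Δ : S → A → S → ℝ) : Prop :=
  ∀ s a, Δ s a ∈ Feas Δmin Δmax s a

/-- Success probability of reaching `F` within the remaining time under policy `π`. -/
noncomputable def vpi {S A : Type*} [Fintype S] (Δ : S → A → S → ℝ) (F : Finset S)
    (π : ℕ → S → A) : ℕ → S → ℝ
  | 0 => fun s => if s ∈ F then 1 else 0
  | (k+1) => fun s => ∑ s', Δ s (π (k+1) s) s' * vpi Δ F π k s'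

/-- A policy is κ-greedy if its action attains the max in the recursion for `g`. -/
def Greedy {S A : Type*} [Fintype S] [Fintype A] [Nonempty A]
    (Δmin Δmax : S → A → S → ℝ) (F : Finset S) (π : ℕ → S → A) : Prop :=
  ∀ k s, kappa Δmin Δmax F k s (π (k+1) s) = gval Δmin Δmax F (k+1) s

/-- `Act Δmin Δmax F p k s` is the pruned action set at remaining time `k+1`
(written `Act (k+1) s` in the paper): actions whose every possibly-reached
successor `s'` (i.e. `Δmax s a s' > 0`) satisfies `g k s' ≥ p`. -/
def Act {S A : Type*} [Fintype S] [Fintype A] [Nonempty A]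
    (Δmin Δmax : S → A → S → ℝ) (F : Finset S) (p : ℝ) (k : ℕ) (s : S) : Set A :=
  {a | ∀ s', 0 < Δmax s a s' → p ≤ gval Δmin Δmax F k s'}


/-!
Narrower intervals shrink every feasible set, and an infimum over a smaller nonempty set is
larger. Since `g` and all feasible vectors are nonnegative, each infimum is over a set bounded
below (so `sInf` is not the junk value) and `g k ≤ g' k` passes through the weighted sums;
induction on the remaining time finishes.
-/

section Monotonicity

variable {S A : Type*} [Fintype S]

theorem Feas_subset_Feas {Δmin Δmax Δmin' Δmax' : S → A → S → ℝ}
    (hmin : ∀ s a s', Δmin s a s' ≤ Δmin' s a s') (hmax : ∀ s a s', Δmax' s a s' ≤ Δmax s a s')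
    (s : S) (a : A) : Feas Δmin' Δmax' s a ⊆ Feas Δmin Δmax s a :=
  fun _ ⟨hbox, hsum⟩ =>
    ⟨fun s' => ⟨(hmin s a s').trans (hbox s').1, (hbox s').2.trans (hmax s a s')⟩, hsum⟩

theorem weightedSum_nonneg_of_mem_Feas {Δmin Δmax : S → A → S → ℝ} {h x : S → ℝ} {s : S}
    {a : A} (h0 : ∀ s', 0 ≤ Δmin s a s') (hh : 0 ≤ h) (hx : x ∈ Feas Δmin Δmax s a) :
    0 ≤ ∑ s', h s' * x s' :=
  sum_nonneg fun s' _ => mul_nonneg (hh s') ((h0 s').trans (hx.1 s').1)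

theorem kappaOf_nonneg {Δmin Δmax : S → A → S → ℝ} {h : S → ℝ} {s : S} {a : A}
    (h0 : ∀ s', 0 ≤ Δmin s a s') (hh : 0 ≤ h) : 0 ≤ kappaOf Δmin Δmax h s a :=
  Real.sInf_nonneg fun _ ⟨_, hx, hval⟩ => hval ▸ weightedSum_nonneg_of_mem_Feas h0 hh hx

theorem kappaOf_le_kappaOf {Δmin Δmax Δmin' Δmax' : S → A → S → ℝ} {h h' : S → ℝ} {s : S}
    {a : A} (h0 : ∀ s', 0 ≤ Δmin s a s') (hsub : Feas Δmin' Δmax' s a ⊆ Feas Δmin Δmax s a)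
    (hne : (Feas Δmin' Δmax' s a).Nonempty) (hh : 0 ≤ h) (hle : h ≤ h') :
    kappaOf Δmin Δmax h s a ≤ kappaOf Δmin' Δmax' h' s a := by
  have hbdd : BddBelow ((fun x : S → ℝ => ∑ s', h s' * x s') '' Feas Δmin Δmax s a) :=
    ⟨0, fun _ ⟨_, hx, hval⟩ => hval ▸ weightedSum_nonneg_of_mem_Feas h0 hh hx⟩
  refine le_csInf (hne.image _) ?_
  rintro _ ⟨x, hx, rfl⟩
  calc kappaOf Δmin Δmax h s a ≤ ∑ s', h s' * x s' := csInf_le hbdd ⟨x, hsub hx, rfl⟩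
    _ ≤ ∑ s', h' s' * x s' :=
      sum_le_sum fun s' _ => mul_le_mul_of_nonneg_right (hle s') ((h0 s').trans ((hsub hx).1 s').1)

variable [Fintype A] [Nonempty A]

theorem gval_nonneg {Δmin Δmax : S → A → S → ℝ} (h0 : ∀ s a s', 0 ≤ Δmin s a s')
    (F : Finset S) : ∀ k, 0 ≤ gval Δmin Δmax F k
  | 0 => fun s => by simp only [gval]; split_ifs <;> norm_num
  | k + 1 => fun s =>
    let a := Classical.arbitrary A
    le_sup'_of_le _ (mem_univ a) (kappaOf_nonneg (h0 s a) (gval_nonneg h0 F k))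

end Monotonicity

theorem gval_mono_of_tighter_bounds_general {S A : Type*} [Fintype S] [Fintype A]
    [Nonempty A]
    (Δmin Δmax Δmin' Δmax' : S → A → S → ℝ)
    (h0 : ∀ s a s', 0 ≤ Δmin s a s')
    (hmin : ∀ s a s', Δmin s a s' ≤ Δmin' s a s')
    (hmax : ∀ s a s', Δmax' s a s' ≤ Δmax s a s')
    (hne' : ∀ (s : S) (a : A), (Feas Δmin' Δmax' s a).Nonempty)
    (F : Finset S) :
    ∀ (k : ℕ) (s : S), gval Δmin Δmax F k s ≤ gval Δmin' Δmax' F k s := by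
  intro k
  induction k with
  | zero => exact fun _ => le_rfl
  | succ k ih =>
    intro s
    exact sup'_mono_fun (hs := univ_nonempty) fun a _ => kappaOf_le_kappaOf (h0 s a) (Feas_subset_Feas hmin hmax s a)
      (hne' s a) (gval_nonneg h0 F k) ih

/-- narrower transition-probability intervals yield a larger
(less conservative) worst-case lower bound `g` on the probability of
constraint satisfaction. -/
theorem gval_mono_of_tighter_bounds {S A : Type*} [Fintype S] [Fintype A]
    [Nonempty S] [Nonempty A]
    (Δmin Δmax Δmin' Δmax' : S → A → S → ℝ)
    (h0 : ∀ s a s', 0 ≤ Δmin s a s')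
    (hmin : ∀ s a s', Δmin s a s' ≤ Δmin' s a s')
    (hmax : ∀ s a s', Δmax' s a s' ≤ Δmax s a s')
    (hne' : ∀ (s : S) (a : A), (Feas Δmin' Δmax' s a).Nonempty)
    (F : Finset S) :
    ∀ (k : ℕ) (s : S), gval Δmin Δmax F k s ≤ gval Δmin' Δmax' F k s :=
  gval_mono_of_tighter_bounds_general Δmin Δmax Δmin' Δmax' h0 hmin hmax hne' F
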